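/- Let ω be a weight function on (0,1) with all moments ∫_0^1 t^n ω(t) dt finite, and B a weight function on (1,∞) with W_B = ∫_0^1 B(1/t²)/(t(1−t)²) dt < ∞. Then for all nonnegative integers j, k, s, the function C_s^ω(e^s_{j,k}) belongs to L^{2,B}(D̄^c) and ‖C_s^ω(e^s_{j,k})‖_B² = π · ε_{k−j} · (γ^ω_{k,s})² · ∫_0^1 u^{k−j−1} B(1/u) du, where ε_p = 1 if p ≥ 0 and ε_p = 0 if p < 0. -/

import Mathlib

open MeasureTheory Complex

/-- The open unit disc in `ℂ`. -/
def unitDisc : Set ℂ := {z : ℂ | ‖z‖ < 1}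

/-- The exterior of the closed unit disc in `ℂ`. -/
def outerDisc : Set ℂ := {z : ℂ | 1 < ‖z‖}

/-- The solid weighted Cauchy transform `C_s^ω f (z) = (1/π) ∫_D f(ξ) ω(|ξ|²)/(z-ξ) dA(ξ)`. -/
noncomputable def solidCauchy (ω : ℝ → ℝ) (f : ℂ → ℂ) (z : ℂ) : ℂ :=
  (Real.pi : ℂ)⁻¹ * ∫ ξ in unitDisc, f ξ * (ω (‖ξ‖ ^ 2) : ℂ) / (z - ξ)

/-- The generic functions `e^ℓ_{j,k}(ξ) = ξ^j ξ̄^k (1 - |ξ|²)^ℓ`. -/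
noncomputable def eFun (j k l : ℕ) (ξ : ℂ) : ℂ :=
  ξ ^ j * (starRingEnd ℂ) ξ ^ k * (((1 - ‖ξ‖ ^ 2) ^ l : ℝ) : ℂ)

/-- The moments `γ^ω_{k,s} = ∫_0^1 t^k (1-t)^s ω(t) dt`. -/
noncomputable def moment (ω : ℝ → ℝ) (k s : ℕ) : ℝ :=
  ∫ t in Set.Ioo (0 : ℝ) 1, t ^ k * (1 - t) ^ s * ω t

/-- The inner product of `L^{2,B}(D̄^c)`:
`⟨f,g⟩_B = ∫_{|z|>1} f(z) conj(g(z)) B(|z|²) dA(z)`. -/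
noncomputable def innerB (B : ℝ → ℝ) (f g : ℂ → ℂ) : ℂ :=
  ∫ z in outerDisc, f z * (starRingEnd ℂ) (g z) * (B (‖z‖ ^ 2) : ℂ)

/-! Expanding `(z - ξ)⁻¹ = ∑ ξⁿ / zⁿ⁺¹` (valid since `|ξ| < 1 < |z|`) and integrating termwise,
`C_s^ω(e^s_{j,k})(z)` becomes a series of moments `∫_D ξ^a ξ̄^b h(|ξ|) dA`. Rotation invariance of
the disc kills every such moment with `a ≠ b`, so only `n = k - j` survives and
`C_s^ω(e^s_{j,k})(z) = γ^ω_{k,s} / z^{k-j+1}`, or `0` when `j > k`. The squared norm is then a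
radial integral over `|z| > 1`, which `u = 1 / |z|²` turns into the announced one; in the variable
`t = √u` its integrand is `2 t^{2(k-j)} (1 - t)²` times the integrand of `W_B`, hence integrable. -/

open Set Real ComplexConjugate

lemma indicator_preimage_norm {E : Type*} [Zero E] (f : ℝ → E) (s : Set ℝ) :
    (norm ⁻¹' s).indicator (fun z : ℂ => f ‖z‖) = fun z => s.indicator f ‖z‖ :=
  funext fun _ => indicator_comp_right _

section Radial

variable {E : Type*} [NormedAddCommGroup E] [NormedSpace ℝ E]

lemma pow_finrank_complex_sub_one_smul_indicator (f : ℝ → E) (s : Set ℝ) :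
    (fun r : ℝ => r ^ (Module.finrank ℝ ℂ - 1) • s.indicator f r) =
      s.indicator (fun r => r • f r) := by
  ext r
  rw [Complex.finrank_real_complex, indicator_smul_apply, pow_one]

lemma integrableOn_preimage_norm_iff (f : ℝ → E) {s : Set ℝ} (hs : MeasurableSet s) :
    IntegrableOn (fun z : ℂ => f ‖z‖) (norm ⁻¹' s) ↔
      IntegrableOn (fun r => r • f r) (Ioi 0 ∩ s) := by
  rw [← integrable_indicator_iff (measurableSet_preimage measurable_norm hs),
    indicator_preimage_norm, integrable_fun_norm_addHaar volume (f := s.indicator f),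
    pow_finrank_complex_sub_one_smul_indicator, integrableOn_indicator_iff hs, inter_comm]

lemma setIntegral_preimage_norm (f : ℝ → E) {s : Set ℝ} (hs : MeasurableSet s) :
    ∫ z in (norm : ℂ → ℝ) ⁻¹' s, f ‖z‖ = (2 * π) • ∫ r in Ioi 0 ∩ s, r • f r := by
  rw [← integral_indicator (measurableSet_preimage measurable_norm hs), indicator_preimage_norm,
    integral_fun_norm_addHaar volume (s.indicator f), pow_finrank_complex_sub_one_smul_indicator,
    setIntegral_indicator hs, Complex.finrank_real_complex, Measure.real, Complex.volume_ball]
  simp [mul_smul, two_smul]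

end Radial

section Substitution

variable {E : Type*} [NormedAddCommGroup E] [NormedSpace ℝ E]

lemma image_sq_Ioo_zero_one : (fun r : ℝ => r ^ 2) '' Ioo 0 1 = Ioo 0 1 := by
  ext x
  constructor
  · rintro ⟨r, ⟨hr0, hr1⟩, rfl⟩
    exact ⟨by positivity, pow_lt_one₀ hr0.le hr1 two_ne_zero⟩
  · rintro ⟨hx0, hx1⟩
    exact ⟨√x, ⟨sqrt_pos.2 hx0, (sqrt_lt' one_pos).2 (by linarith)⟩, sq_sqrt hx0.le⟩

lemma image_inv_Ioo_zero_one : (fun t : ℝ => t⁻¹) '' Ioo 0 1 = Ioi 1 := by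
  rw [image_inv_eq_inv, inv_Ioo_0_left one_pos, inv_one]

lemma hasDerivWithinAt_sq (s : Set ℝ) (r : ℝ) :
    HasDerivWithinAt (fun r : ℝ => r ^ 2) (2 * r) s r := by
  simpa using hasDerivWithinAt_pow 2 r (s := s)

lemma injOn_sq_Ioo : InjOn (fun r : ℝ => r ^ 2) (Ioo 0 1) :=
  fun _ ha _ hb hab => (pow_left_inj₀ ha.1.le hb.1.le two_ne_zero).1 hab

lemma integrableOn_Ioo_iff_comp_sq (g : ℝ → E) :
    IntegrableOn g (Ioo 0 1) ↔ IntegrableOn (fun r => (2 * r) • g (r ^ 2)) (Ioo 0 1) := by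
  conv_lhs => rw [← image_sq_Ioo_zero_one]
  rw [integrableOn_image_iff_integrableOn_abs_deriv_smul measurableSet_Ioo
    (fun r _ => hasDerivWithinAt_sq _ r) injOn_sq_Ioo g]
  refine integrableOn_congr_fun (fun r hr => ?_) measurableSet_Ioo
  rw [abs_of_pos (by linarith [hr.1])]

lemma integral_Ioo_eq_comp_sq (g : ℝ → E) :
    ∫ t in Ioo 0 1, g t = ∫ r in Ioo 0 1, (2 * r) • g (r ^ 2) := by
  conv_lhs => rw [← image_sq_Ioo_zero_one]
  rw [integral_image_eq_integral_abs_deriv_smul measurableSet_Ioo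
    (fun r _ => hasDerivWithinAt_sq _ r) injOn_sq_Ioo g]
  refine setIntegral_congr_fun measurableSet_Ioo (fun r hr => ?_)
  rw [abs_of_pos (by linarith [hr.1])]

lemma hasDerivWithinAt_inv_Ioo {t : ℝ} (ht : t ∈ Ioo (0 : ℝ) 1) :
    HasDerivWithinAt (fun t : ℝ => t⁻¹) (-(t ^ 2)⁻¹) (Ioo 0 1) t :=
  (hasDerivAt_inv ht.1.ne').hasDerivWithinAt

lemma integrableOn_Ioi_one_iff_comp_inv (g : ℝ → E) :
    IntegrableOn g (Ioi 1) ↔ IntegrableOn (fun t => (t ^ 2)⁻¹ • g t⁻¹) (Ioo 0 1) := by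
  conv_lhs => rw [← image_inv_Ioo_zero_one]
  rw [integrableOn_image_iff_integrableOn_abs_deriv_smul measurableSet_Ioo
    (fun t ht => hasDerivWithinAt_inv_Ioo ht) inv_injective.injOn g]
  simp only [abs_neg, abs_inv, abs_pow, sq_abs]

lemma integral_Ioi_one_eq_comp_inv (g : ℝ → E) :
    ∫ x in Ioi 1, g x = ∫ t in Ioo 0 1, (t ^ 2)⁻¹ • g t⁻¹ := by
  conv_lhs => rw [← image_inv_Ioo_zero_one]
  rw [integral_image_eq_integral_abs_deriv_smul measurableSet_Ioo
    (fun t ht => hasDerivWithinAt_inv_Ioo ht) inv_injective.injOn g]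
  simp only [abs_neg, abs_inv, abs_pow, sq_abs]

end Substitution

section OuterDisc

variable (g : ℝ → ℝ) (n : ℕ)

lemma outerDisc_eq_preimage_norm : outerDisc = (norm : ℂ → ℝ) ⁻¹' Ioi 1 := rfl

lemma measurableSet_outerDisc : MeasurableSet outerDisc :=
  measurableSet_lt measurable_const measurable_norm

lemma outerDisc_integrand_comp_inv {t : ℝ} (ht : 0 < t) :
    (t ^ 2)⁻¹ • (t⁻¹ • (g (t⁻¹ ^ 2) / t⁻¹ ^ (2 * n + 2))) = t ^ (2 * n) / t * g (1 / t ^ 2) := by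
  have hsq : t⁻¹ ^ 2 = 1 / t ^ 2 := by rw [inv_pow, one_div]
  rw [smul_eq_mul, smul_eq_mul, hsq, inv_pow]
  field_simp
  ring

lemma zpow_mul_comp_inv_comp_sq {t : ℝ} (ht : 0 < t) :
    (2 * t) • ((t ^ 2) ^ ((n : ℤ) - 1) * g (1 / t ^ 2)) =
      2 * (t ^ (2 * n) / t * g (1 / t ^ 2)) := by
  rw [smul_eq_mul, zpow_sub₀ (by positivity), zpow_natCast, zpow_one, ← pow_mul]
  field_simp

lemma integrableOn_outerDisc_iff :
    IntegrableOn (fun z : ℂ => g (‖z‖ ^ 2) / ‖z‖ ^ (2 * n + 2)) outerDisc ↔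
      IntegrableOn (fun u => u ^ ((n : ℤ) - 1) * g (1 / u)) (Ioo 0 1) := by
  rw [outerDisc_eq_preimage_norm,
    integrableOn_preimage_norm_iff (fun r => g (r ^ 2) / r ^ (2 * n + 2)) measurableSet_Ioi,
    Ioi_inter_Ioi, max_eq_right zero_le_one, integrableOn_Ioi_one_iff_comp_inv,
    integrableOn_congr_fun (fun t ht => outerDisc_integrand_comp_inv g n ht.1) measurableSet_Ioo,
    integrableOn_Ioo_iff_comp_sq (fun u => u ^ ((n : ℤ) - 1) * g (1 / u)),
    integrableOn_congr_fun (fun t ht => zpow_mul_comp_inv_comp_sq g n ht.1) measurableSet_Ioo]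
  exact (integrable_const_mul_iff (isUnit_of_invertible 2) _).symm

lemma setIntegral_outerDisc_eq :
    ∫ z in outerDisc, g (‖z‖ ^ 2) / ‖z‖ ^ (2 * n + 2) =
      π * ∫ u in Ioo 0 1, u ^ ((n : ℤ) - 1) * g (1 / u) := by
  rw [outerDisc_eq_preimage_norm,
    setIntegral_preimage_norm (fun r => g (r ^ 2) / r ^ (2 * n + 2)) measurableSet_Ioi,
    Ioi_inter_Ioi, max_eq_right zero_le_one, integral_Ioi_one_eq_comp_inv,
    setIntegral_congr_fun measurableSet_Ioo (fun t ht => outerDisc_integrand_comp_inv g n ht.1),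
    integral_Ioo_eq_comp_sq (fun u => u ^ ((n : ℤ) - 1) * g (1 / u)),
    setIntegral_congr_fun measurableSet_Ioo (fun t ht => zpow_mul_comp_inv_comp_sq g n ht.1),
    integral_const_mul, smul_eq_mul]
  ring

end OuterDisc

lemma integrableOn_zpow_mul_comp_inv {B : ℝ → ℝ}
    (hW : IntegrableOn (fun t => B (1 / t ^ 2) / (t * (1 - t) ^ 2)) (Ioo 0 1)) (n : ℕ) :
    IntegrableOn (fun u => u ^ ((n : ℤ) - 1) * B (1 / u)) (Ioo 0 1) := by
  rw [integrableOn_Ioo_iff_comp_sq,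
    integrableOn_congr_fun (fun t ht => zpow_mul_comp_inv_comp_sq B n ht.1) measurableSet_Ioo]
  refine Integrable.const_mul ?_ 2
  have hbound : ∀ t ∈ Ioo (0 : ℝ) 1, ‖t ^ (2 * n) * (1 - t) ^ 2‖ ≤ 1 := fun t ht => by
    rw [norm_of_nonneg (mul_nonneg (pow_nonneg ht.1.le _) (sq_nonneg _))]
    exact mul_le_one₀ (pow_le_one₀ ht.1.le ht.2.le) (sq_nonneg _)
      (pow_le_one₀ (by linarith [ht.2]) (by linarith [ht.1]))
  refine IntegrableOn.congr_fun (hW.bdd_mul (f := fun t => t ^ (2 * n) * (1 - t) ^ 2) (c := 1)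
    (by fun_prop) ((ae_restrict_iff' measurableSet_Ioo).2 (.of_forall hbound)))
    (fun t ht => ?_) measurableSet_Ioo
  have : 1 - t ≠ 0 := by linarith [ht.2]
  field_simp [ht.1.ne']

section UnitDisc

variable {E : Type*} [NormedAddCommGroup E] [NormedSpace ℝ E]

lemma measurableSet_unitDisc : MeasurableSet unitDisc :=
  measurableSet_lt measurable_norm measurable_const

lemma unitDisc_eq_preimage_norm : unitDisc = (norm : ℂ → ℝ) ⁻¹' Iio 1 := rfl

lemma setIntegral_unitDisc_comp_circle_mul (f : ℂ → E) (c : Circle) :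
    ∫ ξ in unitDisc, f (c * ξ) = ∫ ξ in unitDisc, f ξ := by
  have hpre : rotation c ⁻¹' unitDisc = unitDisc := by
    ext ξ
    simp [unitDisc, rotation_apply, Circle.norm_coe]
  simpa only [hpre, rotation_apply] using
    (rotation c).measurePreserving.setIntegral_preimage_emb
      (rotation c).toHomeomorph.measurableEmbedding f unitDisc

lemma exists_circle_zpow_eq_neg_one {d : ℤ} (hd : d ≠ 0) : ∃ c : Circle, c ^ d = -1 := by
  refine ⟨Circle.exp (π / d), ?_⟩
  rw [← Circle.exp_intCast_mul, mul_div_cancel₀ _ (Int.cast_ne_zero.2 hd)]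
  ext
  simp [Circle.coe_exp, Complex.exp_pi_mul_I]

lemma setIntegral_unitDisc_pow_mul_conj_pow (h : ℝ → ℂ) (a b : ℕ) :
    ∫ ξ in unitDisc, ξ ^ a * conj ξ ^ b * h ‖ξ‖ =
      if a = b then (2 * π : ℂ) * ∫ r in Ioo (0 : ℝ) 1, (r : ℂ) ^ (2 * a + 1) * h r else 0 := by
  split_ifs with hab
  · subst hab
    have hrad : ∀ ξ : ℂ, ξ ^ a * conj ξ ^ a * h ‖ξ‖ = (‖ξ‖ : ℂ) ^ (2 * a) * h ‖ξ‖ := fun ξ => by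
      rw [← mul_pow, Complex.mul_conj', pow_mul]
    simp_rw [hrad]
    rw [unitDisc_eq_preimage_norm,
      setIntegral_preimage_norm (fun r => (r : ℂ) ^ (2 * a) * h r)
        (measurableSet_Iio (a := (1 : ℝ))),
      Ioi_inter_Iio, real_smul]
    push_cast
    congr 1
    refine setIntegral_congr_fun measurableSet_Ioo fun r _ => ?_
    rw [real_smul]
    ring
  · obtain ⟨c, hc⟩ := exists_circle_zpow_eq_neg_one (sub_ne_zero.2 (Int.natCast_inj.not.2 hab))
    have hc_conj : (c : ℂ) ^ a * conj (c : ℂ) ^ b = -1 := by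
      rw [← Circle.coe_inv_eq_conj, ← Circle.coe_pow, ← Circle.coe_pow, ← Circle.coe_mul,
        ← zpow_natCast, ← zpow_natCast, inv_zpow', ← zpow_add, ← sub_eq_add_neg, hc,
        Circle.coe_neg, Circle.coe_one]
    have hrot : ∀ ξ : ℂ, (c * ξ) ^ a * conj (c * ξ) ^ b * h ‖c * ξ‖ =
        -(ξ ^ a * conj ξ ^ b * h ‖ξ‖) := fun ξ => by
      rw [norm_mul, Circle.norm_coe, one_mul, map_mul, mul_pow, mul_pow]
      linear_combination (ξ ^ a * conj ξ ^ b * h ‖ξ‖) * hc_conj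
    have hinv := setIntegral_unitDisc_comp_circle_mul (fun ξ => ξ ^ a * conj ξ ^ b * h ‖ξ‖) c
    simp only [hrot, integral_neg] at hinv
    linear_combination -hinv / 2

end UnitDisc

lemma hasSum_pow_div_pow_succ {z ξ : ℂ} (h : ‖ξ‖ < ‖z‖) :
    HasSum (fun n => ξ ^ n / z ^ (n + 1)) (z - ξ)⁻¹ := by
  have hz : z ≠ 0 := norm_pos_iff.1 ((norm_nonneg ξ).trans_lt h)
  have hzξ : z - ξ ≠ 0 := fun h' => h.ne (by rw [sub_eq_zero.1 h'])
  have hq : ‖ξ / z‖ < 1 := by rwa [norm_div, div_lt_one (norm_pos_iff.2 hz)]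
  have hterm : (fun n => z⁻¹ * (ξ / z) ^ n) = fun n => ξ ^ n / z ^ (n + 1) := by
    ext n
    rw [div_pow, pow_succ]
    field_simp
  have hsum : z⁻¹ * (1 - ξ / z)⁻¹ = (z - ξ)⁻¹ := by
    field_simp
  simpa only [hterm, hsum] using (hasSum_geometric_of_norm_lt_one hq).mul_left z⁻¹

lemma hasSum_setIntegral_unitDisc_div_sub {f : ℂ → ℂ} (hf : IntegrableOn f unitDisc) {z : ℂ}
    (hz : 1 < ‖z‖) :
    HasSum (fun n => ∫ ξ in unitDisc, f ξ * ξ ^ n / z ^ (n + 1))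
      (∫ ξ in unitDisc, f ξ / (z - ξ)) := by
  have hq : ‖z‖⁻¹ < 1 := inv_lt_one_of_one_lt₀ hz
  refine hasSum_integral_of_dominated_convergence (fun n ξ => ‖f ξ‖ * ‖z‖⁻¹ * ‖z‖⁻¹ ^ n)
    (fun n => by have := hf.aestronglyMeasurable; fun_prop) (fun n => ?_)
    (.of_forall fun ξ => (summable_geometric_of_lt_one (by positivity) hq).mul_left _) ?_ ?_
  · refine (ae_restrict_iff' measurableSet_unitDisc).2 (.of_forall fun ξ hξ => ?_)
    calc ‖f ξ * ξ ^ n / z ^ (n + 1)‖ = ‖f ξ‖ * ‖ξ‖ ^ n * (‖z‖⁻¹ * ‖z‖⁻¹ ^ n) := by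
          rw [norm_div, norm_mul, norm_pow, norm_pow, pow_succ', div_eq_mul_inv, mul_inv, inv_pow]
      _ ≤ ‖f ξ‖ * 1 * (‖z‖⁻¹ * ‖z‖⁻¹ ^ n) := by
          gcongr
          exact pow_le_one₀ (norm_nonneg ξ) (le_of_lt hξ)
      _ = ‖f ξ‖ * ‖z‖⁻¹ * ‖z‖⁻¹ ^ n := by ring
  · simp_rw [tsum_mul_left]
    exact (hf.norm.mul_const _).mul_const _
  · refine (ae_restrict_iff' measurableSet_unitDisc).2 (.of_forall fun ξ hξ => ?_)
    simpa only [← mul_div_assoc, ← div_eq_mul_inv] using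
      (hasSum_pow_div_pow_succ (hξ.trans hz)).mul_left (f ξ)

lemma continuous_eFun (j k l : ℕ) : Continuous (eFun j k l) := by
  unfold eFun
  fun_prop

lemma norm_eFun_le_one (j k l : ℕ) {ξ : ℂ} (hξ : ‖ξ‖ ≤ 1) : ‖eFun j k l ξ‖ ≤ 1 := by
  have h0 : 0 ≤ 1 - ‖ξ‖ ^ 2 := by nlinarith [norm_nonneg ξ]
  rw [eFun, norm_mul, norm_mul, norm_pow, norm_pow, Complex.norm_conj, Complex.norm_real,
    norm_of_nonneg (pow_nonneg h0 l)]
  exact mul_le_one₀ (mul_le_one₀ (pow_le_one₀ (norm_nonneg ξ) hξ) (by positivity)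
    (pow_le_one₀ (norm_nonneg ξ) hξ)) (pow_nonneg h0 l)
    (pow_le_one₀ h0 (by nlinarith [norm_nonneg ξ]))

lemma integrableOn_unitDisc_comp_norm_sq {ω : ℝ → ℝ} (hω : IntegrableOn ω (Ioo 0 1)) :
    IntegrableOn (fun ξ : ℂ => ω (‖ξ‖ ^ 2)) unitDisc := by
  rw [unitDisc_eq_preimage_norm,
    integrableOn_preimage_norm_iff (fun r => ω (r ^ 2)) (measurableSet_Iio (a := (1 : ℝ))),
    Ioi_inter_Iio]
  refine IntegrableOn.congr_fun (((integrableOn_Ioo_iff_comp_sq ω).1 hω).const_mul 2⁻¹)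
    (fun r _ => ?_) measurableSet_Ioo
  simp only [smul_eq_mul]
  ring

lemma moment_eq_two_mul_integral (ω : ℝ → ℝ) (k s : ℕ) :
    moment ω k s = 2 * ∫ r in Ioo 0 1, r ^ (2 * k + 1) * ((1 - r ^ 2) ^ s * ω (r ^ 2)) := by
  rw [moment, integral_Ioo_eq_comp_sq, ← integral_const_mul]
  refine setIntegral_congr_fun measurableSet_Ioo fun r _ => ?_
  simp only [smul_eq_mul]
  ring

lemma setIntegral_unitDisc_eFun_mul_pow (ω : ℝ → ℝ) (j k s n : ℕ) :
    ∫ ξ in unitDisc, eFun j k s ξ * (ω (‖ξ‖ ^ 2) : ℂ) * ξ ^ n =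
      if j + n = k then (π * moment ω k s : ℂ) else 0 := by
  set h : ℝ → ℂ := fun r => ((1 - r ^ 2) ^ s * ω (r ^ 2) : ℝ)
  have hpow : ∀ ξ : ℂ, eFun j k s ξ * (ω (‖ξ‖ ^ 2) : ℂ) * ξ ^ n =
      ξ ^ (j + n) * conj ξ ^ k * h ‖ξ‖ := fun ξ => by
    simp only [eFun, h]
    push_cast
    ring
  simp_rw [hpow]
  rw [setIntegral_unitDisc_pow_mul_conj_pow]
  split_ifs with hjk
  · subst hjk
    rw [moment_eq_two_mul_integral, Complex.ofReal_mul, ← integral_complex_ofReal]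
    simp only [h]
    push_cast
    ring
  · rfl

lemma solidCauchy_eFun_of_one_lt_norm {ω : ℝ → ℝ} (hω : IntegrableOn ω (Ioo 0 1)) (j k s : ℕ)
    {z : ℂ} (hz : 1 < ‖z‖) :
    solidCauchy ω (eFun j k s) z = if j ≤ k then moment ω k s / z ^ (k - j + 1) else 0 := by
  have hf : IntegrableOn (fun ξ => eFun j k s ξ * (ω (‖ξ‖ ^ 2) : ℂ)) unitDisc :=
    (integrableOn_unitDisc_comp_norm_sq hω).ofReal.bdd_mul (c := 1)
      (continuous_eFun j k s).aestronglyMeasurable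
      ((ae_restrict_iff' measurableSet_unitDisc).2
        (.of_forall fun ξ hξ => norm_eFun_le_one j k s (le_of_lt hξ)))
  have hsum := hasSum_setIntegral_unitDisc_div_sub hf hz
  simp_rw [integral_div, setIntegral_unitDisc_eFun_mul_pow] at hsum
  have hπ : (π : ℂ) ≠ 0 := Complex.ofReal_ne_zero.2 pi_ne_zero
  rw [solidCauchy, ← hsum.tsum_eq]
  split_ifs with hjk
  · obtain ⟨n, rfl⟩ := Nat.exists_eq_add_of_le hjk
    rw [tsum_eq_single n fun m hm => by simp [hm]]
    simp only [if_true, add_tsub_cancel_left]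
    field_simp
  · simp [show ∀ n, j + n ≠ k from fun n => by omega]

theorem solidCauchy_eFun_mem_and_normSq_general
    (ω : ℝ → ℝ)
    (hω_mom : ∀ n : ℕ, IntegrableOn (fun t => t ^ n * ω t) (Set.Ioo (0 : ℝ) 1))
    (B : ℝ → ℝ)
    (hW : IntegrableOn (fun t => B (1 / t ^ 2) / (t * (1 - t) ^ 2)) (Set.Ioo (0 : ℝ) 1))
    (j k s : ℕ) :
    -- C_s^ω(e^s_{j,k}) belongs to L^{2,B}(D̄^c)
    IntegrableOn (fun z => ‖solidCauchy ω (eFun j k s) z‖ ^ 2 * B (‖z‖ ^ 2))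
      outerDisc ∧
    -- and its square norm is as announced
    (∫ z in outerDisc, ‖solidCauchy ω (eFun j k s) z‖ ^ 2 * B (‖z‖ ^ 2)) =
      Real.pi * (if j ≤ k then 1 else 0) * (moment ω k s) ^ 2 *
        (∫ u in Set.Ioo (0 : ℝ) 1, u ^ ((k : ℤ) - (j : ℤ) - 1) * B (1 / u)) := by
  have hω : IntegrableOn ω (Ioo 0 1) := by simpa using hω_mom 0
  have hC := fun z (hz : z ∈ outerDisc) => solidCauchy_eFun_of_one_lt_norm hω j k s hz
  by_cases hjk : j ≤ k
  · obtain ⟨n, rfl⟩ := Nat.exists_eq_add_of_le hjk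
    have hrad : EqOn (fun z => ‖solidCauchy ω (eFun j (j + n) s) z‖ ^ 2 * B (‖z‖ ^ 2))
        (fun z => moment ω (j + n) s ^ 2 * (B (‖z‖ ^ 2) / ‖z‖ ^ (2 * n + 2))) outerDisc :=
      fun z hz => by
        simp only
        rw [hC z hz, if_pos hjk, add_tsub_cancel_left, norm_div, norm_pow, Complex.norm_real,
          norm_eq_abs, div_pow, sq_abs, ← pow_mul]
        ring
    have hexp : ((j + n : ℕ) : ℤ) - j - 1 = n - 1 := by push_cast; ring
    rw [integrableOn_congr_fun hrad measurableSet_outerDisc,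
      setIntegral_congr_fun measurableSet_outerDisc hrad, integral_const_mul,
      setIntegral_outerDisc_eq, if_pos hjk, hexp]
    exact ⟨((integrableOn_outerDisc_iff B n).2 (integrableOn_zpow_mul_comp_inv hW n)).const_mul _,
      by ring⟩
  · have hzero : EqOn (fun z => ‖solidCauchy ω (eFun j k s) z‖ ^ 2 * B (‖z‖ ^ 2)) 0 outerDisc :=
      fun z hz => by simp [hC z hz, hjk]
    rw [integrableOn_congr_fun hzero measurableSet_outerDisc,
      setIntegral_congr_fun measurableSet_outerDisc hzero, if_neg hjk]
    exact ⟨integrableOn_zero, by simp⟩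

theorem solidCauchy_eFun_mem_and_normSq
    (ω : ℝ → ℝ) (hω_meas : Measurable ω)
    (hω_nonneg : ∀ t ∈ Set.Ioo (0 : ℝ) 1, 0 ≤ ω t)
    (hω_mom : ∀ n : ℕ, IntegrableOn (fun t => t ^ n * ω t) (Set.Ioo (0 : ℝ) 1))
    (B : ℝ → ℝ) (hB_meas : Measurable B)
    (hB_nonneg : ∀ t ∈ Set.Ioi (1 : ℝ), 0 ≤ B t)
    (hW : IntegrableOn (fun t => B (1 / t ^ 2) / (t * (1 - t) ^ 2)) (Set.Ioo (0 : ℝ) 1))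
    (j k s : ℕ) :
    -- C_s^ω(e^s_{j,k}) belongs to L^{2,B}(D̄^c)
    IntegrableOn (fun z => ‖solidCauchy ω (eFun j k s) z‖ ^ 2 * B (‖z‖ ^ 2))
      outerDisc ∧
    -- and its square norm is as announced
    (∫ z in outerDisc, ‖solidCauchy ω (eFun j k s) z‖ ^ 2 * B (‖z‖ ^ 2)) =
      Real.pi * (if j ≤ k then 1 else 0) * (moment ω k s) ^ 2 *
        (∫ u in Set.Ioo (0 : ℝ) 1, u ^ ((k : ℤ) - (j : ℤ) - 1) * B (1 / u)) :=
  solidCauchy_eFun_mem_and_normSq_general ω hω_mom B hW j k s
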